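/- Let a, d, k be positive integers with gcd(a, d) = 1 and 2 ≤ k ≤ a − 1, let S = ⟨a, a+d, …, a+kd⟩, and write a = q k + r with 0 ≤ r < k. Suppose r = 1. Then for every integer x ∉ {0, a, a + kd, a + (a + kd)}: μ_S(x) = μ_S(x − (q+1)(a+kd)) + ∑_{i=1}^{k−1} μ_S(x − (a+id) − q(a+kd)) − ∑_{i=1}^{k−1} μ_S(x − (a+id)). -/

import Mathlib

open Classical in
/-- The Möbius function of the locally finite poset `(ℤ, ≤_S)` where `x ≤_S y ↔ y - x ∈ S`. -/
noncomputable def mobius2 (S : Set ℤ) (a b : ℤ) : ℤ :=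
  if a = b then 1
  else if b - a ∈ S then
    - ∑ c ∈ (Finset.Ico a b).attach,
        (if ((c : ℤ) - a ∈ S ∧ b - (c : ℤ) ∈ S) then mobius2 S a (c : ℤ) else 0)
  else 0
termination_by (b - a).toNat
decreasing_by
  have := c.2
  rw [Finset.mem_Ico] at this
  omega

/-- The reduced Möbius function `μ_S(x) = μ_S(0, x)`. -/
noncomputable def mobiusRed (S : Set ℤ) (x : ℤ) : ℤ := mobius2 S 0 x

open scoped Classical

noncomputable def chiS (S : Set ℤ) (n : ℤ) : ℤ := if n ∈ S then 1 else 0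

lemma mobiusRed_eq_zero (S : Set ℤ) (h0 : (0:ℤ) ∈ S) {y : ℤ} (hy : y ∉ S) :
    mobiusRed S y = 0 := by
  have hy0 : (0:ℤ) ≠ y := by rintro rfl; exact hy h0
  rw [mobiusRed, mobius2, if_neg hy0, if_neg (by simpa using hy)]

lemma conv_eq (S : Set ℤ) (h0 : (0:ℤ) ∈ S)
    (hadd : ∀ x y : ℤ, x ∈ S → y ∈ S → x + y ∈ S)
    (hnn : ∀ z ∈ S, (0:ℤ) ≤ z) (y : ℤ) :
    ∑ n ∈ Finset.Icc 0 y, chiS S n * mobiusRed S (y - n) =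
      if y = 0 then 1 else 0 := by
  by_cases hyS : y ∈ S
  · have hy0 : 0 ≤ y := hnn y hyS
    -- reflect the sum
    have hrefl : ∑ n ∈ Finset.Icc 0 y, chiS S n * mobiusRed S (y - n)
        = ∑ c ∈ Finset.Icc 0 y, chiS S (y - c) * mobiusRed S c := by
      refine Finset.sum_nbij' (fun n => y - n) (fun n => y - n) ?_ ?_ ?_ ?_ ?_ <;>
        intro n hn <;> simp only [Finset.mem_Icc] at * <;> try omega
      ring_nf
    rw [hrefl]
    by_cases hy : y = 0
    · subst hy
      rw [if_pos rfl]
      have : Finset.Icc (0:ℤ) 0 = {0} := rfl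
      rw [this, Finset.sum_singleton]
      simp only [sub_zero, chiS, if_pos h0]
      rw [mobiusRed, mobius2, if_pos rfl]
      norm_num
    · rw [if_neg hy]
      have hsplit : ∑ c ∈ Finset.Icc 0 y, chiS S (y - c) * mobiusRed S c
          = (∑ c ∈ Finset.Ico 0 y, chiS S (y - c) * mobiusRed S c)
            + chiS S 0 * mobiusRed S y := by
        have h1 : Finset.Icc (0:ℤ) y = insert y (Finset.Ico 0 y) := by
          ext z; simp only [Finset.mem_Icc, Finset.mem_insert, Finset.mem_Ico]; omega
        rw [h1, Finset.sum_insert (by simp), sub_self, add_comm]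
      rw [hsplit]
      have hmu : mobiusRed S y
          = - ∑ c ∈ (Finset.Ico (0:ℤ) y).attach,
              (if ((c : ℤ) - 0 ∈ S ∧ y - (c : ℤ) ∈ S) then mobius2 S 0 (c : ℤ) else 0) := by
        rw [mobiusRed, mobius2, if_neg (Ne.symm hy), if_pos (by simpa using hyS)]
      have hmu2 : mobiusRed S y
          = - ∑ c ∈ Finset.Ico (0:ℤ) y,
              (if (c ∈ S ∧ y - c ∈ S) then mobiusRed S c else 0) := by
        rw [hmu]
        congr 1
        rw [← Finset.sum_attach (Finset.Ico (0:ℤ) y)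
          (fun c => if (c ∈ S ∧ y - c ∈ S) then mobiusRed S c else 0)]
        simp [mobiusRed]
      have hterm : ∀ c ∈ Finset.Ico (0:ℤ) y,
          chiS S (y - c) * mobiusRed S c
            = (if (c ∈ S ∧ y - c ∈ S) then mobiusRed S c else 0) := by
        intro c _
        by_cases hc : c ∈ S
        · by_cases hyc : y - c ∈ S <;> simp [chiS, hc, hyc]
        · simp [chiS, hc, mobiusRed_eq_zero S h0 hc]
      rw [Finset.sum_congr rfl hterm]
      have hsum : (∑ c ∈ Finset.Ico (0:ℤ) y,
          (if (c ∈ S ∧ y - c ∈ S) then mobiusRed S c else 0)) = - mobiusRed S y := by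
        rw [hmu2]; ring
      rw [hsum]
      simp [chiS, h0]
  · have hy0 : y ≠ 0 := by rintro rfl; exact hyS h0
    rw [if_neg hy0]
    refine Finset.sum_eq_zero fun n hn => ?_
    by_cases hnS : n ∈ S
    · by_cases hynS : y - n ∈ S
      · exact absurd (by simpa using hadd _ _ hynS hnS) hyS
      · simp [mobiusRed_eq_zero S h0 hynS]
    · simp [chiS, hnS]

def Sset (a d k : ℕ) : Set ℤ :=
  {z | ∃ c b : ℕ, b ≤ k * c ∧ z = (c : ℤ) * a + (b : ℤ) * d}

def Tset (a d k : ℕ) : Set ℤ :=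
  {z : ℤ | ∃ c : Fin (k + 1) → ℕ,
      z = ∑ i, (c i : ℤ) * ((a : ℤ) + (i : ℕ) * (d : ℤ))}

lemma Sset_zero (a d k : ℕ) : (0:ℤ) ∈ Sset a d k := ⟨0, 0, by simp, by simp⟩

lemma Sset_add (a d k : ℕ) {x y : ℤ} (hx : x ∈ Sset a d k) (hy : y ∈ Sset a d k) :
    x + y ∈ Sset a d k := by
  obtain ⟨c1, b1, h1, rfl⟩ := hx
  obtain ⟨c2, b2, h2, rfl⟩ := hy
  exact ⟨c1 + c2, b1 + b2, by nlinarith, by push_cast; ring⟩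

lemma Sset_nonneg (a d k : ℕ) {z : ℤ} (hz : z ∈ Sset a d k) : 0 ≤ z := by
  obtain ⟨c, b, _, rfl⟩ := hz
  positivity

lemma Tset_zero (a d k : ℕ) : (0:ℤ) ∈ Tset a d k :=
  ⟨fun _ => 0, by simp⟩

lemma Tset_add (a d k : ℕ) {x y : ℤ} (hx : x ∈ Tset a d k) (hy : y ∈ Tset a d k) :
    x + y ∈ Tset a d k := by
  obtain ⟨c1, rfl⟩ := hx
  obtain ⟨c2, rfl⟩ := hy
  refine ⟨fun i => c1 i + c2 i, ?_⟩
  rw [← Finset.sum_add_distrib]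
  exact Finset.sum_congr rfl fun i _ => by push_cast; ring

lemma Tset_gen (a d k : ℕ) (j : ℕ) (hj : j ≤ k) :
    ((a : ℤ) + (j : ℕ) * (d : ℤ)) ∈ Tset a d k := by
  refine ⟨fun i => if (i : ℕ) = j then 1 else 0, ?_⟩
  rw [Finset.sum_eq_single (⟨j, by omega⟩ : Fin (k+1))]
  · simp
  · intro i _ hne
    have : (i : ℕ) ≠ j := fun h => hne (Fin.ext (by simpa using h))
    simp [this]
  · simp

lemma Tset_natmul (a d k : ℕ) (n : ℕ) {t : ℤ} (ht : t ∈ Tset a d k) :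
    (n : ℤ) * t ∈ Tset a d k := by
  induction n with
  | zero => simpa using Tset_zero a d k
  | succ m ih =>
      have : ((m+1 : ℕ) : ℤ) * t = (m : ℤ) * t + t := by push_cast; ring
      rw [this]
      exact Tset_add a d k ih ht

lemma span_eq_Sset (a d k : ℕ) (hk : 0 < k) : Tset a d k = Sset a d k := by
  ext z
  constructor
  · rintro ⟨c, rfl⟩
    refine ⟨∑ i, c i, ∑ i : Fin (k+1), (i : ℕ) * c i, ?_, ?_⟩
    · rw [Finset.mul_sum]
      exact Finset.sum_le_sum fun i _ => Nat.mul_le_mul_right _ (Fin.is_le i)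
    · push_cast
      rw [Finset.sum_mul, Finset.sum_mul, ← Finset.sum_add_distrib]
      exact Finset.sum_congr rfl fun i _ => by ring
  · rintro ⟨c, b, hbc, rfl⟩
    have hbkv : b = k * (b / k) + b % k := (Nat.div_add_mod b k).symm
    have hvk : b % k < k := Nat.mod_lt _ hk
    have h2 : (b : ℤ) = (k:ℤ) * (b / k : ℕ) + ((b % k : ℕ) : ℤ) := by exact_mod_cast hbkv
    rcases Nat.eq_zero_or_pos (b % k) with hv0 | hv0
    · have huc : b / k ≤ c := by
        refine Nat.le_of_mul_le_mul_left ?_ hk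
        omega
      have key : (c : ℤ) * a + (b : ℤ) * d
          = ((c - b / k : ℕ) : ℤ) * ((a:ℤ) + ((0:ℕ):ℤ) * d)
            + ((b / k : ℕ) : ℤ) * ((a:ℤ) + ((k:ℕ):ℤ) * d) := by
        have h1 : ((c - b / k : ℕ) : ℤ) = (c:ℤ) - (b / k : ℕ) := by omega
        rw [h1]
        have h3 : ((b % k : ℕ) : ℤ) = 0 := by exact_mod_cast hv0
        simp only [Nat.cast_zero, Nat.cast_one]
        linear_combination (d:ℤ) * h2 + (d:ℤ) * h3
      rw [key]
      exact Tset_add a d k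
        (Tset_natmul a d k _ (Tset_gen a d k 0 (by omega)))
        (Tset_natmul a d k _ (Tset_gen a d k k le_rfl))
    · have huc : b / k + 1 ≤ c := by
        have : k * (b / k) < k * c := by omega
        have := Nat.lt_of_mul_lt_mul_left this
        omega
      have key : (c : ℤ) * a + (b : ℤ) * d
          = ((c - b / k - 1 : ℕ) : ℤ) * ((a:ℤ) + ((0:ℕ):ℤ) * d)
            + ((b / k : ℕ) : ℤ) * ((a:ℤ) + ((k:ℕ):ℤ) * d)
            + ((1:ℕ) : ℤ) * ((a:ℤ) + ((b % k : ℕ):ℤ) * d) := by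
        have h1 : ((c - b / k - 1 : ℕ) : ℤ) = (c:ℤ) - (b / k : ℕ) - 1 := by omega
        rw [h1]
        simp only [Nat.cast_zero, Nat.cast_one]
        linear_combination (d:ℤ) * h2
      rw [key]
      exact Tset_add a d k (Tset_add a d k
        (Tset_natmul a d k _ (Tset_gen a d k 0 (by omega)))
        (Tset_natmul a d k _ (Tset_gen a d k k le_rfl)))
        (Tset_natmul a d k 1 (Tset_gen a d k (b % k) (by omega)))

lemma repr_unique (a d : ℕ) (ha : 0 < a) (hgcd : Nat.gcd a d = 1)
    (c₁ c₂ : ℤ) (b₁ b₂ : ℕ) (h₁ : b₁ < a) (h₂ : b₂ < a)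
    (h : c₁ * a + (b₁:ℤ) * d = c₂ * a + (b₂:ℤ) * d) : b₁ = b₂ ∧ c₁ = c₂ := by
  have hco : IsCoprime (a : ℤ) (d : ℤ) := by
    rw [Int.isCoprime_iff_gcd_eq_one]
    exact_mod_cast hgcd
  have hdvd : (a:ℤ) ∣ ((b₁:ℤ) - b₂) * d := ⟨c₂ - c₁, by linarith⟩
  have hdvd2 : (a:ℤ) ∣ ((b₁:ℤ) - b₂) := hco.dvd_of_dvd_mul_right hdvd
  have hb : (b₁:ℤ) = b₂ := by
    have := Int.eq_zero_of_abs_lt_dvd hdvd2 (by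
      rw [abs_lt]; constructor <;> [push_cast; push_cast] <;> omega)
    omega
  have hbb : b₁ = b₂ := by exact_mod_cast hb
  refine ⟨hbb, ?_⟩
  have : c₁ * a = c₂ * a := by rw [hb] at h; linarith
  exact mul_right_cancel₀ (by exact_mod_cast ha.ne' : (a:ℤ) ≠ 0) this
def cdiv (b k : ℕ) : ℕ := (b + k - 1) / k

lemma cd1 (b k : ℕ) (hk : 0 < k) : b ≤ k * cdiv b k := by
  have h1 := Nat.div_add_mod (b + k - 1) k
  have h2 := Nat.mod_lt (b + k - 1) hk
  unfold cdiv
  omega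

lemma cd2 (b k : ℕ) (hk : 0 < k) : k * cdiv b k ≤ b + k - 1 := by
  have h1 := Nat.div_add_mod (b + k - 1) k
  unfold cdiv
  omega

lemma cd_eq (b c k : ℕ) (hk : 0 < k) (h1 : b ≤ k * c) (h2 : k * c ≤ b + k - 1) :
    cdiv b k = c := by
  have a1 := cd1 b k hk
  have a2 := cd2 b k hk
  rcases lt_trichotomy (cdiv b k) c with h | h | h
  · exfalso
    have : k * (cdiv b k + 1) ≤ k * c := Nat.mul_le_mul_left k (by omega)
    have : k * cdiv b k + k ≤ k * c := by rw [Nat.mul_add] at this; omega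
    omega
  · exact h
  · exfalso
    have : k * (c + 1) ≤ k * cdiv b k := Nat.mul_le_mul_left k (by omega)
    have : k * c + k ≤ k * cdiv b k := by rw [Nat.mul_add] at this; omega
    omega

lemma cd_zero (k : ℕ) (hk : 0 < k) : cdiv 0 k = 0 := cd_eq 0 0 k hk (by omega) (by omega)

lemma cd_succ (b k : ℕ) (hk : 0 < k) : cdiv (b + k) k = cdiv b k + 1 := by
  unfold cdiv
  have : b + k + k - 1 = (b + k - 1) + k := by omega
  rw [this, Nat.add_div_right _ hk]

lemma cd_min (b c k : ℕ) (hk : 0 < k) (h : b ≤ k * c) : cdiv b k ≤ c := by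
  have a2 := cd2 b k hk
  by_contra hlt
  have : k * (c + 1) ≤ k * cdiv b k := Nat.mul_le_mul_left k (by omega)
  have : k * c + k ≤ k * cdiv b k := by rw [Nat.mul_add] at this; omega
  omega

lemma mem_reduced (a d k : ℕ) (ha : 0 < a) {n : ℤ}
    (hn : n ∈ Sset a d k) : ∃ c b : ℕ, b < a ∧ b ≤ k * c ∧ n = (c:ℤ)*a + (b:ℤ)*d := by
  obtain ⟨c, b₀, hb, rfl⟩ := hn
  obtain ⟨U, hU⟩ : ∃ U, b₀ / a = U := ⟨_, rfl⟩
  obtain ⟨V, hV⟩ : ∃ V, b₀ % a = V := ⟨_, rfl⟩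
  have hUV : b₀ = a * U + V := by rw [← hU, ← hV]; exact (Nat.div_add_mod b₀ a).symm
  have hVa : V < a := by rw [← hV]; exact Nat.mod_lt _ ha
  refine ⟨c + U * d, V, hVa, ?_, ?_⟩
  · calc V ≤ b₀ := by omega
      _ ≤ k * c := hb
      _ ≤ k * (c + U * d) := Nat.mul_le_mul_left _ (by omega)
  · have h' : (b₀:ℤ) = (a:ℤ) * U + V := by exact_mod_cast hUV
    push_cast
    linear_combination (d:ℤ) * h'

lemma apery (a d k : ℕ) (ha : 0 < a) (hk : 0 < k)
    (hgcd : Nat.gcd a d = 1) (n : ℤ) :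
    (n ∈ Sset a d k ∧ n - a ∉ Sset a d k) ↔
      ∃ b : ℕ, b < a ∧ n = (cdiv b k : ℤ) * a + (b:ℤ) * d := by
  constructor
  · rintro ⟨hn, hna⟩
    obtain ⟨c, b, hba, hbk, rfl⟩ := mem_reduced a d k ha hn
    have hle : cdiv b k ≤ c := cd_min b c k hk hbk
    rcases eq_or_lt_of_le hle with h | h
    · exact ⟨b, hba, by rw [h]⟩
    · exfalso
      apply hna
      refine ⟨c - 1, b, ?_, ?_⟩
      · have h1 := cd1 b k hk
        have : k * cdiv b k ≤ k * (c-1) := Nat.mul_le_mul_left _ (by omega)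
        omega
      · have : ((c - 1 : ℕ) : ℤ) = (c:ℤ) - 1 := by omega
        rw [this]; ring
  · rintro ⟨b, hba, rfl⟩
    refine ⟨⟨cdiv b k, b, cd1 b k hk, rfl⟩, ?_⟩
    intro hmem
    obtain ⟨c₂, b₂, hb₂a, hb₂k, heq⟩ := mem_reduced a d k ha hmem
    have heq2 : (cdiv b k : ℤ) * a + (b:ℤ) * d = ((c₂:ℤ)+1) * a + (b₂:ℤ) * d := by
      linarith [heq]
    obtain ⟨hb12, hc12⟩ := repr_unique a d ha hgcd _ _ _ _ hba hb₂a heq2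
    have hc : cdiv b k = c₂ + 1 := by exact_mod_cast hc12
    have h1 := cd2 b k hk
    rw [hc, Nat.mul_add] at h1
    omega

lemma chi_diff (a d k : ℕ) (ha : 0 < a) (hk : 0 < k)
    (hgcd : Nat.gcd a d = 1) (n : ℤ) :
    chiS (Sset a d k) n - chiS (Sset a d k) (n - a)
      = if (∃ b : ℕ, b < a ∧ n = (cdiv b k : ℤ) * a + (b:ℤ) * d) then 1 else 0 := by
  by_cases hP : ∃ b : ℕ, b < a ∧ n = (cdiv b k : ℤ) * a + (b:ℤ) * d
  · rw [if_pos hP]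
    obtain ⟨h1, h2⟩ := (apery a d k ha hk hgcd n).2 hP
    simp [chiS, h1, h2]
  · rw [if_neg hP]
    by_cases h1 : n - (a:ℤ) ∈ Sset a d k
    · have h2 : n ∈ Sset a d k := by
        have haS : (a:ℤ) ∈ Sset a d k := ⟨1, 0, by omega, by push_cast; ring⟩
        have := Sset_add a d k h1 haS
        simpa using this
      simp [chiS, h1, h2]
    · have h2 : n ∉ Sset a d k := fun hn => hP ((apery a d k ha hk hgcd n).1 ⟨hn, h1⟩)
      simp [chiS, h1, h2]

lemma sum_delta (s : Finset ℕ) (f : ℕ → ℤ)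
    (hf : ∀ i ∈ s, ∀ j ∈ s, f i = f j → i = j) (n : ℤ) :
    ∑ i ∈ s, (if n = f i then (1:ℤ) else 0) = if (∃ i ∈ s, n = f i) then 1 else 0 := by
  by_cases h : ∃ i ∈ s, n = f i
  · obtain ⟨i₀, hi₀, rfl⟩ := h
    rw [if_pos ⟨i₀, hi₀, rfl⟩, Finset.sum_eq_single i₀]
    · simp
    · intro j hj hne
      rw [if_neg]
      intro hfe
      exact hne (hf j hj i₀ hi₀ hfe.symm)
    · intro habs; exact absurd hi₀ habs
  · rw [if_neg h]
    refine Finset.sum_eq_zero fun i hi => ?_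
    rw [if_neg]
    intro he
    exact h ⟨i, hi, he⟩

set_option maxHeartbeats 1000000 in
lemma dagger (a d k q : ℕ) (ha : 0 < a) (hd : 0 < d) (hk2 : 2 ≤ k) (hq : 1 ≤ q)
    (hgcd : Nat.gcd a d = 1) (haqk : a = q * k + 1) (n : ℤ) :
    chiS (Sset a d k) n - chiS (Sset a d k) (n - a)
      - chiS (Sset a d k) (n - ((a:ℤ) + (k:ℤ) * d))
      + chiS (Sset a d k) (n - (a:ℤ) - ((a:ℤ) + (k:ℤ) * d))
    = (if n = 0 then 1 else 0)
      + (∑ i ∈ Finset.Icc 1 (k-1), if n = (a:ℤ) + (i:ℤ) * d then 1 else 0)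
      - (if n = ((q:ℤ)+1) * ((a:ℤ) + (k:ℤ) * d) then 1 else 0)
      - ∑ i ∈ Finset.Icc 1 (k-1),
          (if n = (a:ℤ) + (i:ℤ) * d + (q:ℤ) * ((a:ℤ) + (k:ℤ) * d) then 1 else 0) := by
  have hk : 0 < k := by omega
  have hkq : k ≤ q * k := by
    calc k = 1 * k := (one_mul k).symm
      _ ≤ q * k := Nat.mul_le_mul_right k hq
  have hka : k + 1 ≤ a := by omega
  have ha' : (0:ℤ) < (a:ℤ) := by exact_mod_cast ha
  have hd' : (0:ℤ) < (d:ℤ) := by exact_mod_cast hd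
  have hk' : (0:ℤ) < (k:ℤ) := by exact_mod_cast hk
  have hq' : (1:ℤ) ≤ (q:ℤ) := by exact_mod_cast hq
  have hacast : (a:ℤ) = (q:ℤ) * k + 1 := by exact_mod_cast haqk
  obtain ⟨M, hM⟩ : ∃ M : ℤ, M = (a:ℤ) + (k:ℤ) * d := ⟨_, rfl⟩
  rw [← hM]
  have hMpos : 0 < M := by rw [hM]; nlinarith
  have hpsi : chiS (Sset a d k) n - chiS (Sset a d k) (n - a)
      - chiS (Sset a d k) (n - M) + chiS (Sset a d k) (n - (a:ℤ) - M)
      = (if (∃ b : ℕ, b < a ∧ n = (cdiv b k : ℤ) * a + (b:ℤ) * d) then (1:ℤ) else 0)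
        - (if (∃ b : ℕ, b < a ∧ n - M = (cdiv b k : ℤ) * a + (b:ℤ) * d) then 1 else 0) := by
    have h1 := chi_diff a d k ha hk hgcd n
    have h2 := chi_diff a d k ha hk hgcd (n - M)
    have e : n - (a:ℤ) - M = n - M - (a:ℤ) := by ring
    rw [e]
    linarith [h1, h2]
  rw [hpsi]
  clear hpsi
  have hWnonneg : ∀ b : ℕ, (0:ℤ) ≤ (cdiv b k : ℤ) * a + (b:ℤ) * d := by
    intro b; positivity
  have hNP : ∀ c j : ℕ, j < a → q + 1 ≤ c →
      ¬ ∃ b : ℕ, b < a ∧ (c:ℤ) * a + (j:ℤ) * d = (cdiv b k : ℤ) * a + (b:ℤ) * d := by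
    rintro c j hja hc ⟨b, hba, heq⟩
    obtain ⟨hbj, hcd⟩ := repr_unique a d ha hgcd ((c:ℤ)) ((cdiv b k : ℤ)) j b hja hba heq
    have hcd' : c = cdiv b k := by exact_mod_cast hcd
    have hbqk : b ≤ q * k := by omega
    have := cd_min b q k hk (by rw [mul_comm]; exact hbqk)
    omega
  have hred1 : ((q:ℤ)+1) * M = ((q+1+d:ℕ):ℤ) * a + ((k-1:ℕ):ℤ) * d := by
    have e1 : ((q+1+d:ℕ):ℤ) = (q:ℤ)+1+d := by push_cast; ring
    have e2 : ((k-1:ℕ):ℤ) = (k:ℤ)-1 := by omega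
    rw [hM, e1, e2]; linear_combination (-(d:ℤ)) * hacast
  have hred2 : ∀ i : ℕ, 1 ≤ i →
      (a:ℤ) + (i:ℤ)*d + (q:ℤ)*M = ((q+1+d:ℕ):ℤ) * a + ((i-1:ℕ):ℤ) * d := by
    intro i hi
    have e1 : ((q+1+d:ℕ):ℤ) = (q:ℤ)+1+d := by push_cast; ring
    have e2 : ((i-1:ℕ):ℤ) = (i:ℤ)-1 := by omega
    rw [hM, e1, e2]; linear_combination (-(d:ℤ)) * hacast
  have hqmW : (q:ℤ) * M = (cdiv (q*k) k : ℤ) * a + ((q*k:ℕ):ℤ) * d := by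
    have hcd : cdiv (q*k) k = q := by
      refine cd_eq (q*k) q k hk (le_of_eq (mul_comm q k)) ?_
      rw [mul_comm k q]
      omega
    rw [hcd, hM]; push_cast; ring
  have hsub : (q-1)*k + k = q * k := by
    rw [Nat.sub_mul]; omega
  have hqmW2 : ∀ i : ℕ, 1 ≤ i → i ≤ k - 1 →
      (a:ℤ) + (i:ℤ)*d + ((q:ℤ)-1)*M
        = (cdiv ((q-1)*k + i) k : ℤ) * a + (((q-1)*k + i : ℕ):ℤ) * d := by
    intro i hi1 hik
    have hc : cdiv ((q-1)*k + i) k = q := by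
      refine cd_eq _ q k hk ?_ ?_
      · rw [mul_comm k q]; omega
      · rw [mul_comm k q]; omega
    rw [hc]
    have e3 : (((q-1)*k + i : ℕ):ℤ) = ((q:ℤ)-1)*k + i := by
      push_cast [Nat.cast_sub (by omega : 1 ≤ q)]
      ring
    rw [e3, hM]; ring
  have hne1 : ∀ i : ℕ, i < a → (a:ℤ) + (i:ℤ)*d ≠ ((q:ℤ)+1) * M := by
    intro i hia heq
    rw [hred1] at heq
    have heq' : (1:ℤ) * a + (i:ℤ)*d = ((q+1+d:ℕ):ℤ)*a + ((k-1:ℕ):ℤ)*d := by linarith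
    obtain ⟨_, hc⟩ := repr_unique a d ha hgcd 1 _ i (k-1) hia (by omega) heq'
    have : (1:ℕ) = q+1+d := by exact_mod_cast hc
    omega
  have hne2 : ∀ i j : ℕ, i < a → 1 ≤ j → j ≤ k - 1 →
      (a:ℤ) + (i:ℤ)*d ≠ (a:ℤ) + (j:ℤ)*d + (q:ℤ)*M := by
    intro i j hia hj hjk heq
    rw [hred2 j hj] at heq
    have heq' : (1:ℤ) * a + (i:ℤ)*d = ((q+1+d:ℕ):ℤ)*a + ((j-1:ℕ):ℤ)*d := by linarith
    obtain ⟨_, hc⟩ := repr_unique a d ha hgcd 1 _ i (j-1) hia (by omega) heq'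
    have : (1:ℕ) = q+1+d := by exact_mod_cast hc
    omega
  have hne3 : ∀ j : ℕ, 1 ≤ j → j ≤ k - 1 →
      ((q:ℤ)+1) * M ≠ (a:ℤ) + (j:ℤ)*d + (q:ℤ)*M := by
    intro j hj hjk heq
    rw [hred1, hred2 j hj] at heq
    obtain ⟨hb, _⟩ := repr_unique a d ha hgcd ((q+1+d:ℕ):ℤ) ((q+1+d:ℕ):ℤ) (k-1) (j-1)
      (by omega) (by omega) heq
    omega
  have hinjH : ∀ i ∈ Finset.Icc 1 (k-1), ∀ j ∈ Finset.Icc 1 (k-1),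
      (a:ℤ) + (i:ℤ)*d = (a:ℤ) + (j:ℤ)*d → i = j := by
    intro i _ j _ h
    have h2 : (i:ℤ) = j := mul_right_cancel₀ hd'.ne' (by linarith : (i:ℤ)*d = (j:ℤ)*d)
    exact_mod_cast h2
  have hinjT : ∀ i ∈ Finset.Icc 1 (k-1), ∀ j ∈ Finset.Icc 1 (k-1),
      (a:ℤ) + (i:ℤ)*d + (q:ℤ)*M = (a:ℤ) + (j:ℤ)*d + (q:ℤ)*M → i = j := by
    intro i hi j hj h
    exact hinjH i hi j hj (by linarith)
  rw [sum_delta _ _ hinjH n, sum_delta _ _ hinjT n]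
  by_cases hn0 : n = 0
  · subst hn0
    rw [if_pos rfl]
    have hP0 : ∃ b : ℕ, b < a ∧ (0:ℤ) = (cdiv b k : ℤ) * a + (b:ℤ) * d :=
      ⟨0, ha, by rw [cd_zero k hk]; simp⟩
    have hPm : ¬ ∃ b : ℕ, b < a ∧ (0:ℤ) - M = (cdiv b k : ℤ) * a + (b:ℤ) * d := by
      rintro ⟨b, hb, heq⟩
      have := hWnonneg b
      linarith
    rw [if_pos hP0, if_neg hPm]
    have hs1 : ¬ ∃ i ∈ Finset.Icc 1 (k-1), (0:ℤ) = (a:ℤ) + (i:ℤ)*d := by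
      rintro ⟨i, hi, heq⟩
      have : (0:ℤ) ≤ (i:ℤ)*d := by positivity
      linarith
    have hs2 : ¬ ∃ i ∈ Finset.Icc 1 (k-1), (0:ℤ) = (a:ℤ) + (i:ℤ)*d + (q:ℤ)*M := by
      rintro ⟨i, hi, heq⟩
      have h1 : (0:ℤ) ≤ (i:ℤ)*d := by positivity
      have h2 : (0:ℤ) ≤ (q:ℤ)*M := by positivity
      linarith
    have hs3 : (0:ℤ) ≠ ((q:ℤ)+1) * M := by
      have : (0:ℤ) < ((q:ℤ)+1) * M := by positivity
      linarith
    rw [if_neg hs1, if_neg hs2, if_neg hs3]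
    norm_num
  · by_cases hHi : ∃ i ∈ Finset.Icc 1 (k-1), n = (a:ℤ) + (i:ℤ)*d
    · obtain ⟨i, hi, rfl⟩ := hHi
      rw [Finset.mem_Icc] at hi
      have hia : i < a := by omega
      have hPn : ∃ b : ℕ, b < a ∧ (a:ℤ) + (i:ℤ)*d = (cdiv b k : ℤ) * a + (b:ℤ) * d := by
        refine ⟨i, hia, ?_⟩
        have hcd : cdiv i k = 1 := cd_eq i 1 k hk (by omega) (by omega)
        rw [hcd]; ring
      have hPm : ¬ ∃ b : ℕ, b < a ∧ (a:ℤ) + (i:ℤ)*d - M = (cdiv b k : ℤ) * a + (b:ℤ) * d := by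
        rintro ⟨b, hb, heq⟩
        have h1 := hWnonneg b
        have h2 : (a:ℤ) + (i:ℤ)*d - M = ((i:ℤ) - k)*d := by rw [hM]; ring
        have h3 : (i:ℤ) ≤ (k:ℤ) - 1 := by omega
        nlinarith
      have hz : ¬ (a:ℤ) + (i:ℤ)*d = 0 := by
        have : (0:ℤ) ≤ (i:ℤ)*d := by positivity
        intro h; linarith
      have him : i ∈ Finset.Icc 1 (k-1) := by rw [Finset.mem_Icc]; omega
      have hEx : ∃ j ∈ Finset.Icc 1 (k-1), (a:ℤ) + (i:ℤ)*d = (a:ℤ) + (j:ℤ)*d :=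
        ⟨i, him, rfl⟩
      have hnT : ¬ ∃ j ∈ Finset.Icc 1 (k-1),
          (a:ℤ) + (i:ℤ)*d = (a:ℤ) + (j:ℤ)*d + (q:ℤ)*M := by
        rintro ⟨j, hj, heq⟩
        rw [Finset.mem_Icc] at hj
        exact hne2 i j hia hj.1 hj.2 heq
      rw [if_pos hPn, if_neg hPm, if_neg hz, if_pos hEx, if_neg (hne1 i hia), if_neg hnT]
      norm_num
    · by_cases hT0 : n = ((q:ℤ)+1) * M
      · subst hT0
        have hPn : ¬ ∃ b : ℕ, b < a ∧ ((q:ℤ)+1) * M = (cdiv b k : ℤ) * a + (b:ℤ) * d := by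
          rw [hred1]
          exact hNP (q+1+d) (k-1) (by omega) (by omega)
        have hPm : ∃ b : ℕ, b < a ∧ ((q:ℤ)+1) * M - M = (cdiv b k : ℤ) * a + (b:ℤ) * d := by
          refine ⟨q*k, by omega, ?_⟩
          rw [← hqmW]; ring
        rw [if_neg hPn, if_pos hPm]
        have hz : ¬ ((q:ℤ)+1) * M = 0 := by
          have : (0:ℤ) < ((q:ℤ)+1) * M := by positivity
          linarith
        have hnH : ¬ ∃ i ∈ Finset.Icc 1 (k-1), ((q:ℤ)+1) * M = (a:ℤ) + (i:ℤ)*d := by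
          rintro ⟨i, hi, heq⟩
          rw [Finset.mem_Icc] at hi
          exact hne1 i (by omega) heq.symm
        have hnT : ¬ ∃ j ∈ Finset.Icc 1 (k-1),
            ((q:ℤ)+1) * M = (a:ℤ) + (j:ℤ)*d + (q:ℤ)*M := by
          rintro ⟨j, hj, heq⟩
          rw [Finset.mem_Icc] at hj
          exact hne3 j hj.1 hj.2 heq
        rw [if_neg hz, if_neg hnH, if_pos rfl, if_neg hnT]
        norm_num
      · by_cases hTi : ∃ i ∈ Finset.Icc 1 (k-1), n = (a:ℤ) + (i:ℤ)*d + (q:ℤ)*M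
        · obtain ⟨i, hi, rfl⟩ := hTi
          rw [Finset.mem_Icc] at hi
          have hPn : ¬ ∃ b : ℕ, b < a ∧
              (a:ℤ) + (i:ℤ)*d + (q:ℤ)*M = (cdiv b k : ℤ) * a + (b:ℤ) * d := by
            rw [hred2 i hi.1]
            exact hNP (q+1+d) (i-1) (by omega) (by omega)
          have hPm : ∃ b : ℕ, b < a ∧
              (a:ℤ) + (i:ℤ)*d + (q:ℤ)*M - M = (cdiv b k : ℤ) * a + (b:ℤ) * d := by
            refine ⟨(q-1)*k + i, by omega, ?_⟩
            rw [← hqmW2 i hi.1 hi.2]; ring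
          rw [if_neg hPn, if_pos hPm]
          have hz : ¬ (a:ℤ) + (i:ℤ)*d + (q:ℤ)*M = 0 := by
            have h1 : (0:ℤ) ≤ (i:ℤ)*d := by positivity
            have h2 : (0:ℤ) ≤ (q:ℤ)*M := by positivity
            intro h; linarith
          have hnH : ¬ ∃ j ∈ Finset.Icc 1 (k-1),
              (a:ℤ) + (i:ℤ)*d + (q:ℤ)*M = (a:ℤ) + (j:ℤ)*d := by
            rintro ⟨j, hj, heq⟩
            rw [Finset.mem_Icc] at hj
            exact hne2 j i (by omega) hi.1 hi.2 heq.symm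
          have him : i ∈ Finset.Icc 1 (k-1) := by rw [Finset.mem_Icc]; omega
          have hEx : ∃ j ∈ Finset.Icc 1 (k-1),
              (a:ℤ) + (i:ℤ)*d + (q:ℤ)*M = (a:ℤ) + (j:ℤ)*d + (q:ℤ)*M := ⟨i, him, rfl⟩
          rw [if_neg hz, if_neg hnH, if_neg hT0, if_pos hEx]
          norm_num
        · have hiff : (∃ b : ℕ, b < a ∧ n = (cdiv b k : ℤ) * a + (b:ℤ) * d) ↔
              (∃ b : ℕ, b < a ∧ n - M = (cdiv b k : ℤ) * a + (b:ℤ) * d) := by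
            constructor
            · rintro ⟨b, hba, heq⟩
              rcases lt_or_ge b k with hbk | hbk
              · rcases Nat.eq_zero_or_pos b with hb0 | hb0
                · exfalso
                  apply hn0
                  rw [heq, hb0, cd_zero k hk]
                  simp
                · exfalso
                  apply hHi
                  refine ⟨b, by rw [Finset.mem_Icc]; omega, ?_⟩
                  have hcd : cdiv b k = 1 := cd_eq b 1 k hk (by omega) (by omega)
                  rw [heq, hcd]; ring
              · refine ⟨b - k, by omega, ?_⟩
                have hsucc : cdiv b k = cdiv (b-k) k + 1 := by
                  have := cd_succ (b-k) k hk
                  have e : b - k + k = b := by omega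
                  rw [e] at this
                  omega
                have e1 : ((cdiv b k : ℕ):ℤ) = ((cdiv (b-k) k : ℕ):ℤ) + 1 := by
                  exact_mod_cast hsucc
                have e2 : ((b-k:ℕ):ℤ) = (b:ℤ) - k := by omega
                rw [heq, e1, e2, hM]; ring
            · rintro ⟨b, hba, heq⟩
              rcases lt_or_ge (b + k) a with hbk | hbk
              · refine ⟨b + k, hbk, ?_⟩
                have hsucc := cd_succ b k hk
                have e1 : ((cdiv (b+k) k : ℕ):ℤ) = ((cdiv b k : ℕ):ℤ) + 1 := by
                  exact_mod_cast hsucc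
                have e2 : ((b+k:ℕ):ℤ) = (b:ℤ) + k := by push_cast; ring
                have : n = (cdiv b k : ℤ) * a + (b:ℤ) * d + M := by linarith
                rw [this, e1, e2, hM]; ring
              · exfalso
                rcases eq_or_lt_of_le (by omega : b ≤ q * k) with hb | hb
                · apply hT0
                  have heq2 : n - M = (cdiv (q*k) k : ℤ) * a + ((q*k:ℕ):ℤ) * d := by
                    rw [← hb]; exact_mod_cast heq
                  rw [← hqmW] at heq2
                  linarith
                · apply hTi
                  set i := b - (q-1)*k with hi
                  have hib : (q-1)*k + i = b := by omega
                  have hi1 : 1 ≤ i := by omega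
                  have hik : i ≤ k - 1 := by omega
                  refine ⟨i, by rw [Finset.mem_Icc]; omega, ?_⟩
                  have heq2 : n - M = (cdiv ((q-1)*k + i) k : ℤ) * a
                      + (((q-1)*k + i:ℕ):ℤ) * d := by rw [hib]; exact heq
                  rw [← hqmW2 i hi1 hik] at heq2
                  linarith
          rw [if_neg hn0, if_neg hHi, if_neg hT0, if_neg hTi]
          by_cases hP : ∃ b : ℕ, b < a ∧ n = (cdiv b k : ℤ) * a + (b:ℤ) * d
          · rw [if_pos hP, if_pos (hiff.1 hP)]; norm_num
          · rw [if_neg hP, if_neg (fun h => hP (hiff.2 h))]; norm_num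

lemma shift_conv (S : Set ℤ) (h0 : (0:ℤ) ∈ S)
    (hadd : ∀ x y : ℤ, x ∈ S → y ∈ S → x + y ∈ S)
    (hnn : ∀ z ∈ S, (0:ℤ) ≤ z) (x s : ℤ) (hs : 0 ≤ s) :
    ∑ n ∈ Finset.Icc 0 x, chiS S (n - s) * mobiusRed S (x - n) =
      if x = s then 1 else 0 := by
  have hvan : ∀ n : ℤ, n < 0 → chiS S n = 0 := by
    intro n hn
    rw [chiS, if_neg]
    intro h
    have := hnn n h
    omega
  have h1 : ∑ n ∈ Finset.Icc 0 x, chiS S (n - s) * mobiusRed S (x - n)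
      = ∑ n ∈ Finset.Icc s x, chiS S (n - s) * mobiusRed S (x - n) := by
    refine (Finset.sum_subset (Finset.Icc_subset_Icc (by omega) le_rfl) ?_).symm
    intro n hn hns
    rw [Finset.mem_Icc] at hn hns
    rw [hvan (n - s) (by omega), zero_mul]
  have h2 : ∑ n ∈ Finset.Icc s x, chiS S (n - s) * mobiusRed S (x - n)
      = ∑ m ∈ Finset.Icc 0 (x - s), chiS S m * mobiusRed S ((x - s) - m) := by
    refine Finset.sum_nbij' (fun n => n - s) (fun m => m + s) ?_ ?_ ?_ ?_ ?_ <;>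
      intro n hn <;> simp only [Finset.mem_Icc] at * <;> try omega
    congr 1
    ring
  rw [h1, h2, conv_eq S h0 hadd hnn (x - s)]
  by_cases h : x = s
  · rw [if_pos (by omega), if_pos h]
  · rw [if_neg (by omega), if_neg h]

lemma delta_conv (S : Set ℤ) (h0 : (0:ℤ) ∈ S)
    (hnn : ∀ z ∈ S, (0:ℤ) ≤ z) (x t : ℤ) (ht : 0 ≤ t) :
    ∑ n ∈ Finset.Icc 0 x, (if n = t then (1:ℤ) else 0) * mobiusRed S (x - n)
      = mobiusRed S (x - t) := by
  have h1 : ∀ n ∈ Finset.Icc 0 x,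
      (if n = t then (1:ℤ) else 0) * mobiusRed S (x - n)
        = if n = t then mobiusRed S (x - n) else 0 := by
    intro n _
    split_ifs <;> simp
  rw [Finset.sum_congr rfl h1, Finset.sum_ite_eq' (Finset.Icc 0 x) t
    (fun n => mobiusRed S (x - n))]
  by_cases h : t ∈ Finset.Icc 0 x
  · rw [if_pos h]
  · rw [if_neg h]
    symm
    apply mobiusRed_eq_zero S h0
    intro hmem
    have := hnn _ hmem
    rw [Finset.mem_Icc] at h
    omega


set_option maxHeartbeats 1000000 in
theorem mobius_recursion_arithmetic_r_eq_one
    (a d k q r : ℕ) (ha : 0 < a) (hd : 0 < d) (hk2 : 2 ≤ k) (hka : k ≤ a - 1)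
    (hgcd : Nat.gcd a d = 1)
    (hqr : a = q * k + r) (hrk : r < k) (hr : r = 1)
    (S : Set ℤ)
    (hS : S = {z : ℤ | ∃ c : Fin (k + 1) → ℕ,
      z = ∑ i, (c i : ℤ) * ((a : ℤ) + (i : ℕ) * (d : ℤ))})
    (x : ℤ)
    (hx : x ∉ ({0, (a : ℤ), (a : ℤ) + k * d, (a : ℤ) + ((a : ℤ) + k * d)} : Set ℤ)) :
    mobiusRed S x =
      mobiusRed S (x - (q + 1) * ((a : ℤ) + k * d)) +
        (∑ i ∈ Finset.Icc 1 (k - 1),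
          mobiusRed S (x - ((a : ℤ) + (i : ℕ) * d) - q * ((a : ℤ) + k * d))) -
        ∑ i ∈ Finset.Icc 1 (k - 1), mobiusRed S (x - ((a : ℤ) + (i : ℕ) * d)) := by
  subst hr
  have hq1 : 1 ≤ q := by
    rcases Nat.eq_zero_or_pos q with h | h
    · subst h; omega
    · exact h
  have hk : 0 < k := by omega
  have hSS : S = Sset a d k := by rw [hS]; exact span_eq_Sset a d k hk
  rw [hSS]
  have h0 := Sset_zero a d k
  have hadd : ∀ u v : ℤ, u ∈ Sset a d k → v ∈ Sset a d k → u + v ∈ Sset a d k :=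
    fun u v hu hv => Sset_add a d k hu hv
  have hnn : ∀ z ∈ Sset a d k, (0:ℤ) ≤ z := fun z hz => Sset_nonneg a d k hz
  simp only [Set.mem_insert_iff, Set.mem_singleton_iff, not_or] at hx
  obtain ⟨hx0, hxa, hxm, hxam⟩ := hx
  have ha' : (0:ℤ) ≤ (a:ℤ) := by positivity
  have hM' : (0:ℤ) ≤ (a:ℤ) + (k:ℤ) * d := by positivity
  have hway1 : ∑ n ∈ Finset.Icc 0 x,
      (chiS (Sset a d k) n - chiS (Sset a d k) (n - (a:ℤ))
        - chiS (Sset a d k) (n - ((a:ℤ) + (k:ℤ) * d))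
        + chiS (Sset a d k) (n - (a:ℤ) - ((a:ℤ) + (k:ℤ) * d)))
        * mobiusRed (Sset a d k) (x - n) = 0 := by
    have hsplit : ∀ n ∈ Finset.Icc 0 x,
        (chiS (Sset a d k) n - chiS (Sset a d k) (n - (a:ℤ))
          - chiS (Sset a d k) (n - ((a:ℤ) + (k:ℤ) * d))
          + chiS (Sset a d k) (n - (a:ℤ) - ((a:ℤ) + (k:ℤ) * d)))
          * mobiusRed (Sset a d k) (x - n)
        = chiS (Sset a d k) n * mobiusRed (Sset a d k) (x - n)
          - chiS (Sset a d k) (n - (a:ℤ)) * mobiusRed (Sset a d k) (x - n)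
          - chiS (Sset a d k) (n - ((a:ℤ) + (k:ℤ) * d)) * mobiusRed (Sset a d k) (x - n)
          + chiS (Sset a d k) (n - ((a:ℤ) + ((a:ℤ) + (k:ℤ) * d)))
            * mobiusRed (Sset a d k) (x - n) := by
      intro n _
      rw [show n - (a:ℤ) - ((a:ℤ) + (k:ℤ) * d)
          = n - ((a:ℤ) + ((a:ℤ) + (k:ℤ) * d)) from by ring]
      ring
    rw [Finset.sum_congr rfl hsplit, Finset.sum_add_distrib, Finset.sum_sub_distrib,
      Finset.sum_sub_distrib, conv_eq _ h0 hadd hnn x,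
      shift_conv _ h0 hadd hnn x ((a:ℤ)) ha',
      shift_conv _ h0 hadd hnn x ((a:ℤ) + (k:ℤ) * d) hM',
      shift_conv _ h0 hadd hnn x ((a:ℤ) + ((a:ℤ) + (k:ℤ) * d)) (by positivity),
      if_neg hx0, if_neg hxa, if_neg hxm, if_neg hxam]
    ring
  have hway2 : ∑ n ∈ Finset.Icc 0 x,
      (chiS (Sset a d k) n - chiS (Sset a d k) (n - (a:ℤ))
        - chiS (Sset a d k) (n - ((a:ℤ) + (k:ℤ) * d))
        + chiS (Sset a d k) (n - (a:ℤ) - ((a:ℤ) + (k:ℤ) * d)))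
        * mobiusRed (Sset a d k) (x - n)
      = mobiusRed (Sset a d k) x
        + (∑ i ∈ Finset.Icc 1 (k-1),
            mobiusRed (Sset a d k) (x - ((a:ℤ) + (i:ℤ) * d)))
        - mobiusRed (Sset a d k) (x - ((q:ℤ)+1) * ((a:ℤ) + (k:ℤ) * d))
        - ∑ i ∈ Finset.Icc 1 (k-1),
            mobiusRed (Sset a d k)
              (x - ((a:ℤ) + (i:ℤ) * d + (q:ℤ) * ((a:ℤ) + (k:ℤ) * d))) := by
    have hd2 : ∀ n ∈ Finset.Icc 0 x,
        (chiS (Sset a d k) n - chiS (Sset a d k) (n - (a:ℤ))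
          - chiS (Sset a d k) (n - ((a:ℤ) + (k:ℤ) * d))
          + chiS (Sset a d k) (n - (a:ℤ) - ((a:ℤ) + (k:ℤ) * d)))
          * mobiusRed (Sset a d k) (x - n)
        = (if n = 0 then (1:ℤ) else 0) * mobiusRed (Sset a d k) (x - n)
          + (∑ i ∈ Finset.Icc 1 (k-1),
              (if n = (a:ℤ) + (i:ℤ) * d then (1:ℤ) else 0)
                * mobiusRed (Sset a d k) (x - n))
          - (if n = ((q:ℤ)+1) * ((a:ℤ) + (k:ℤ) * d) then (1:ℤ) else 0)
              * mobiusRed (Sset a d k) (x - n)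
          - ∑ i ∈ Finset.Icc 1 (k-1),
              (if n = (a:ℤ) + (i:ℤ) * d + (q:ℤ) * ((a:ℤ) + (k:ℤ) * d) then (1:ℤ) else 0)
                * mobiusRed (Sset a d k) (x - n) := by
      intro n _
      rw [dagger a d k q ha hd hk2 hq1 hgcd hqr n, ← Finset.sum_mul, ← Finset.sum_mul]
      ring
    rw [Finset.sum_congr rfl hd2, Finset.sum_sub_distrib, Finset.sum_sub_distrib,
      Finset.sum_add_distrib]
    have p1 : ∑ n ∈ Finset.Icc 0 x,
        (if n = 0 then (1:ℤ) else 0) * mobiusRed (Sset a d k) (x - n)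
        = mobiusRed (Sset a d k) x := by
      rw [delta_conv _ h0 hnn x 0 le_rfl, sub_zero]
    have p2 : ∑ n ∈ Finset.Icc 0 x, ∑ i ∈ Finset.Icc 1 (k-1),
        (if n = (a:ℤ) + (i:ℤ) * d then (1:ℤ) else 0) * mobiusRed (Sset a d k) (x - n)
        = ∑ i ∈ Finset.Icc 1 (k-1),
            mobiusRed (Sset a d k) (x - ((a:ℤ) + (i:ℤ) * d)) := by
      rw [Finset.sum_comm]
      exact Finset.sum_congr rfl fun i _ =>
        delta_conv _ h0 hnn x ((a:ℤ) + (i:ℤ) * d) (by positivity)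
    have p3 : ∑ n ∈ Finset.Icc 0 x,
        (if n = ((q:ℤ)+1) * ((a:ℤ) + (k:ℤ) * d) then (1:ℤ) else 0)
          * mobiusRed (Sset a d k) (x - n)
        = mobiusRed (Sset a d k) (x - ((q:ℤ)+1) * ((a:ℤ) + (k:ℤ) * d)) :=
      delta_conv _ h0 hnn x _ (by positivity)
    have p4 : ∑ n ∈ Finset.Icc 0 x, ∑ i ∈ Finset.Icc 1 (k-1),
        (if n = (a:ℤ) + (i:ℤ) * d + (q:ℤ) * ((a:ℤ) + (k:ℤ) * d) then (1:ℤ) else 0)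
          * mobiusRed (Sset a d k) (x - n)
        = ∑ i ∈ Finset.Icc 1 (k-1),
            mobiusRed (Sset a d k)
              (x - ((a:ℤ) + (i:ℤ) * d + (q:ℤ) * ((a:ℤ) + (k:ℤ) * d))) := by
      rw [Finset.sum_comm]
      exact Finset.sum_congr rfl fun i _ =>
        delta_conv _ h0 hnn x _ (by positivity)
    rw [p1, p2, p3, p4]
  have hmain := hway1.symm.trans hway2
  have hsumeq : ∑ i ∈ Finset.Icc 1 (k-1),
      mobiusRed (Sset a d k) (x - ((a:ℤ) + (i:ℤ) * d) - (q:ℤ) * ((a:ℤ) + (k:ℤ) * d))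
      = ∑ i ∈ Finset.Icc 1 (k-1),
          mobiusRed (Sset a d k)
            (x - ((a:ℤ) + (i:ℤ) * d + (q:ℤ) * ((a:ℤ) + (k:ℤ) * d))) :=
    Finset.sum_congr rfl fun i _ => by rw [sub_sub]
  rw [hsumeq]
  linarith [hmain]
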